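/- arXiv:2102.03431 — 3 statements merged into one kernel-verified Lean document; each statement's English description precedes it below -/
import Mathlib

section
/- Let n ≥ 4, F ⊆ {1,…,n} with 1 ∈ F, and a ∈ (ℤ/2ℤ)^F with a_1 = 0. Then J_n ∩ G(n,F,a) = ker M_𝔼. -/
noncomputable section

open MvPolynomial Finset

/-- Bit strings of length `n` with coordinate sum zero (the index set `G_n`). -/
abbrev Gn (n : ℕ) : Type := {g : Fin n → ZMod 2 // ∑ i, g i = 0}

/-- The polynomial ring `R_n = ℂ[q_g : g ∈ G_n]`. -/
abbrev Rn (n : ℕ) : Type := MvPolynomial (Gn n) ℂ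

/-- The parameter polynomial ring, with variables `a^i_g = X (i, g)`. -/
abbrev Sn : Type := MvPolynomial (ℕ × ZMod 2) ℂ

/-- The partial sum `g_1 + ⋯ + g_j` (with `j` 1-based). -/
def psum1 {n : ℕ} (g : Fin n → ZMod 2) (j : ℕ) : ZMod 2 :=
  ∑ i ∈ univ.filter fun i : Fin n => (i : ℕ) < j, g i

/-- The partial sum `g_2 + ⋯ + g_j` (with `j` 1-based). -/
def psum2 {n : ℕ} (g : Fin n → ZMod 2) (j : ℕ) : ZMod 2 :=
  ∑ i ∈ univ.filter fun i : Fin n => 0 < (i : ℕ) ∧ (i : ℕ) < j, g i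

/-- The leaf-edge monomial `a^1_{g_1} ⋯ a^n_{g_n}`. -/
def leafMonom {n : ℕ} (g : Fin n → ZMod 2) : Sn :=
  ∏ j : Fin n, X ((j : ℕ) + 1, g j)

/-- `ψ_{T_0}(q_g) = (∏_{j=1}^n a^j_{g_j}) ∏_{j=1}^{n-1} a^{n+j}_{g_1+⋯+g_j}`. -/
def tree0Monom {n : ℕ} (g : Fin n → ZMod 2) : Sn :=
  leafMonom g * ∏ j ∈ Icc 1 (n - 1), X (n + j, psum1 g j)

/-- `ψ_{T_1}(q_g) = (∏_{j=1}^n a^j_{g_j}) ∏_{j=2}^{n} a^{n+j}_{g_2+⋯+g_j}`. -/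
def tree1Monom {n : ℕ} (g : Fin n → ZMod 2) : Sn :=
  leafMonom g * ∏ j ∈ Icc 2 n, X (n + j, psum2 g j)

/-- The parameterization of the first underlying tree of the `n`-sunlet. -/
def ψtree0 (n : ℕ) : Rn n →ₐ[ℂ] Sn := aeval fun g => tree0Monom g.1

/-- The parameterization of the second underlying tree of the `n`-sunlet. -/
def ψtree1 (n : ℕ) : Rn n →ₐ[ℂ] Sn := aeval fun g => tree1Monom g.1

/-- The `n`-sunlet parameterization `ψ_n`. -/
def ψsunlet (n : ℕ) : Rn n →ₐ[ℂ] Sn := aeval fun g => tree0Monom g.1 + tree1Monom g.1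

/-- The `n`-sunlet ideal `J_n = ker ψ_n`. -/
def Jsunlet (n : ℕ) : Ideal (Rn n) := RingHom.ker (ψsunlet n)

/-- The tree ideal `I_{T_0}`. -/
def Itree0 (n : ℕ) : Ideal (Rn n) := RingHom.ker (ψtree0 n)

/-- The tree ideal `I_{T_1}`. -/
def Itree1 (n : ℕ) : Ideal (Rn n) := RingHom.ker (ψtree1 n)

/-- The condition for `q_g q_h` to be a spanning monomial of the glove `G(n,F,a)`:
`g` and `h` agree with `a` on `F`, and `g_i + h_i = 1` off `F`. -/
def GlovePair {n : ℕ} (F : Finset (Fin n)) (a : Fin n → ZMod 2) (g h : Gn n) : Prop :=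
  (∀ i ∈ F, g.1 i = a i) ∧ (∀ i ∈ F, h.1 i = a i) ∧ ∀ i ∉ F, g.1 i + h.1 i = 1

instance {n : ℕ} (F : Finset (Fin n)) (a : Fin n → ZMod 2) (g h : Gn n) :
    Decidable (GlovePair F a g h) := by unfold GlovePair; infer_instance

/-- The glove `G(n,F,a)`, as a `ℂ`-subspace of `R_n`. -/
def glove {n : ℕ} (F : Finset (Fin n)) (a : Fin n → ZMod 2) : Submodule ℂ (Rn n) :=
  Submodule.span ℂ {p | ∃ g h : Gn n, GlovePair F a g h ∧ p = X g * X h}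

/-- Strict lexicographic order on bit strings. -/
def lexLt {n : ℕ} (g h : Fin n → ZMod 2) : Prop :=
  ∃ i : Fin n, (∀ j : Fin n, j < i → g j = h j) ∧ (g i).val < (h i).val

instance {n : ℕ} (g h : Fin n → ZMod 2) : Decidable (lexLt g h) := by
  unfold lexLt; infer_instance

/-- Non-strict lexicographic order on bit strings. -/
def lexLe {n : ℕ} (g h : Fin n → ZMod 2) : Prop := g = h ∨ lexLt g h

instance {n : ℕ} (g h : Fin n → ZMod 2) : Decidable (lexLe g h) := by
  unfold lexLe; infer_instance

/-- Membership in `L(n,F,a)`: `g` is the lexicographically smaller index of a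
spanning monomial `q_g q_h` of the glove `G(n,F,a)`. -/
def Lmem {n : ℕ} (F : Finset (Fin n)) (a : Fin n → ZMod 2) (g : Gn n) : Prop :=
  ∃ h : Gn n, GlovePair F a g h ∧ lexLe g.1 h.1

instance {n : ℕ} (F : Finset (Fin n)) (a : Fin n → ZMod 2) (g : Gn n) :
    Decidable (Lmem F a g) := by unfold Lmem; infer_instance

/-- The cardinality of `{1,…,j} ∖ F` (1-based `j`). -/
def cardInit {n : ℕ} (F : Finset (Fin n)) (j : ℕ) : ℕ :=
  ((univ.filter fun i : Fin n => (i : ℕ) < j) \ F).card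

/-- `𝔼(n,F) = {j : 2 ≤ j ≤ n-1, |{1,…,j} ∖ F| even}`. -/
def Eset (n : ℕ) (F : Finset (Fin n)) : Finset ℕ :=
  (Icc 2 (n - 1)).filter fun j => Even (cardInit F j)

/-- `𝕆(n,F) = {j : 2 ≤ j ≤ n-1, |{1,…,j} ∖ F| odd}`. -/
def Oset (n : ℕ) (F : Finset (Fin n)) : Finset ℕ :=
  (Icc 2 (n - 1)).filter fun j => Odd (cardInit F j)

/-- The general element of the glove `G(n,F,a)` with coefficient `c g` on the
spanning monomial `q_g q_h` (where `g` is lexicographically smaller than `h`). -/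
def gloveElt {n : ℕ} (F : Finset (Fin n)) (a : Fin n → ZMod 2) (c : Gn n → ℂ) : Rn n :=
  ∑ g : Gn n, ∑ h : Gn n,
    (if GlovePair F a g h ∧ lexLe g.1 h.1 then c g else 0) • (X g * X h : Rn n)

/-- `M_𝔼` vanishes on the glove element with coefficients `c`: each coordinate of the
image (indexed by an 𝔼-coloring) is the sum of the coefficients of the spanning
monomials with that 𝔼-coloring. -/
def MEkerCond {n : ℕ} (F : Finset (Fin n)) (a : Fin n → ZMod 2) (c : Gn n → ℂ) : Prop :=
  ∀ v : ℕ → ZMod 2,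
    (∑ g : Gn n, if Lmem F a g ∧ ∀ j ∈ Eset n F, psum1 g.1 j = v j then c g else 0) = 0

/-- `M_𝕆` vanishes on the glove element with coefficients `c`. -/
def MOkerCond {n : ℕ} (F : Finset (Fin n)) (a : Fin n → ZMod 2) (c : Gn n → ℂ) : Prop :=
  ∀ v : ℕ → ZMod 2,
    (∑ g : Gn n, if Lmem F a g ∧ ∀ j ∈ Oset n F, psum1 g.1 j = v j then c g else 0) = 0


/-!
On the glove every index has `g_1 = 0`, so the two tree monomials of `ψ_n(q_g)` differ only in
the edges `n+1` and `2n`, and `ψ_n(q_g) = (a^{n+1}_0 + a^{2n}_0) · m_g` for a monomial `m_g`.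
For a glove pair `(g, h)` the partial sums satisfy
`h_1 + ⋯ + h_j = g_1 + ⋯ + g_j + |{1,…,j} ∖ F|`, so `ψ_n(q_g q_h)` is a nonzero factor depending
only on `(n, F, a)` times `∏_{j ∈ 𝔼} (a^{n+j}_{g_1+⋯+g_j})²`, a monomial that determines and is
determined by the even coloring of `q_g q_h`. Hence `ψ_n` of a glove element is that factor times
a sum of monomials whose coefficients are the coordinates of `M_𝔼`.
-/

lemma ZMod.eq_add_one_of_add_eq_one {x y : ZMod 2} (h : x + y = 1) : y = x + 1 := by
  revert x y; decide

lemma MvPolynomial.X_mul_X_add_one {R α : Type*} [CommSemiring R] (k : α) (x : ZMod 2) :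
    (X (k, x) * X (k, x + 1) : MvPolynomial (α × ZMod 2) R) = X (k, 0) * X (k, 1) := by
  fin_cases x
  · rfl
  · exact mul_comm _ _

lemma MvPolynomial.sum_monomial_eq_zero_iff {R σ ι : Type*} [CommSemiring R] [DecidableEq σ]
    (s : Finset ι) (f : ι → σ →₀ ℕ) (c : ι → R) :
    ∑ i ∈ s, monomial (f i) (c i) = 0 ↔ ∀ d, ∑ i ∈ s with f i = d, c i = 0 := by
  simp only [MvPolynomial.ext_iff, coeff_sum, coeff_monomial, coeff_zero, sum_filter]

lemma Finset.forall_sum_filter_comp_eq_zero_iff {ι α β M : Type*} [AddCommMonoid M]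
    [DecidableEq β] (s : Finset ι) (κ : ι → α) (D : α → β) (c : ι → M) :
    (∀ b, ∑ i ∈ s with D (κ i) = b, c i = 0) ↔ ∀ v, ∑ i ∈ s with D (κ i) = D v, c i = 0 := by
  refine ⟨fun h v => h (D v), fun h b => ?_⟩
  by_cases hb : ∃ i ∈ s, D (κ i) = b
  · obtain ⟨i, -, rfl⟩ := hb
    exact h (κ i)
  · push Not at hb
    exact sum_eq_zero fun i hi => absurd (mem_filter.mp hi).2 (hb i (mem_filter.mp hi).1)

section Sunlet

variable {n : ℕ} {F : Finset (Fin n)} {a : Fin n → ZMod 2}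

lemma psum1_one (hn : 0 < n) (g : Fin n → ZMod 2) : psum1 g 1 = g ⟨0, hn⟩ := by
  rw [psum1, sum_eq_single_of_mem ⟨0, hn⟩ (by simp)]
  intro i hi hne
  exact absurd (Fin.ext (by simpa using hi)) hne

lemma psum1_self (g : Gn n) : psum1 g.1 n = 0 := by
  rw [psum1, filter_true_of_mem fun i _ => i.isLt]
  exact g.2

lemma psum2_eq_psum1 (hn : 0 < n) {g : Fin n → ZMod 2} (hg : g ⟨0, hn⟩ = 0) (j : ℕ) :
    psum2 g j = psum1 g j := by
  simp only [psum1, psum2, sum_filter]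
  refine sum_congr rfl fun i _ => ?_
  rcases Nat.eq_zero_or_pos i with hi | hi
  · obtain rfl : i = ⟨0, hn⟩ := Fin.ext hi
    simp [hg]
  · simp [hi]

/-- The internal edges `n+2, …, 2n-1` shared by both trees. -/
def midEdgeMonom (n : ℕ) (g : Fin n → ZMod 2) : Sn :=
  ∏ j ∈ Icc 2 (n - 1), X (n + j, psum1 g j)

lemma ψsunlet_X_of_apply_zero (hn : 2 ≤ n) {g : Gn n} (hg : g.1 ⟨0, by omega⟩ = 0) :
    ψsunlet n (X g) = (X (n + 1, 0) + X (n + n, 0)) * (leafMonom g.1 * midEdgeMonom n g.1) := by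
  have hlow : Icc 1 (n - 1) = insert 1 (Icc 2 (n - 1)) := by
    ext j; simp only [mem_Icc, mem_insert]; omega
  have hhigh : Icc 2 n = insert n (Icc 2 (n - 1)) := by
    ext j; simp only [mem_Icc, mem_insert]; omega
  rw [ψsunlet, aeval_X, tree0Monom, tree1Monom, hlow, hhigh, prod_insert (by simp),
    prod_insert (by simp only [mem_Icc]; omega), psum1_one (by omega), hg]
  simp only [psum2_eq_psum1 (by omega) hg, psum1_self, midEdgeMonom]
  ring

namespace GlovePair

variable {g h : Gn n}

lemma apply_of_mem (hgh : GlovePair F a g h) {i : Fin n} (hi : i ∈ F) : h.1 i = g.1 i :=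
  (hgh.2.1 i hi).trans (hgh.1 i hi).symm

lemma apply_of_notMem (hgh : GlovePair F a g h) {i : Fin n} (hi : i ∉ F) : h.1 i = g.1 i + 1 :=
  ZMod.eq_add_one_of_add_eq_one (hgh.2.2 i hi)

lemma unique {h' : Gn n} (hgh : GlovePair F a g h) (hgh' : GlovePair F a g h') : h = h' := by
  refine Subtype.ext (funext fun i => ?_)
  by_cases hi : i ∈ F
  · rw [hgh.apply_of_mem hi, hgh'.apply_of_mem hi]
  · rw [hgh.apply_of_notMem hi, hgh'.apply_of_notMem hi]

lemma psum1_right (hgh : GlovePair F a g h) (j : ℕ) :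
    psum1 h.1 j = psum1 g.1 j + (cardInit F j : ZMod 2) := by
  have hterm : ∀ i : Fin n, h.1 i = g.1 i + if i ∉ F then 1 else 0 := fun i => by
    by_cases hi : i ∈ F
    · rw [if_neg (not_not.mpr hi), add_zero, hgh.apply_of_mem hi]
    · rw [if_pos hi, hgh.apply_of_notMem hi]
  simp only [psum1, hterm, sum_add_distrib, sum_boole, cardInit, sdiff_eq_filter, filter_filter]

lemma leafMonom_mul (hgh : GlovePair F a g h) :
    leafMonom g.1 * leafMonom h.1 =
      ∏ j : Fin n, if j ∈ F then X ((j : ℕ) + 1, a j) ^ 2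
        else X ((j : ℕ) + 1, 0) * X ((j : ℕ) + 1, 1) := by
  rw [leafMonom, leafMonom, ← prod_mul_distrib]
  refine prod_congr rfl fun j _ => ?_
  split_ifs with hj
  · rw [hgh.apply_of_mem hj, hgh.1 j hj, sq]
  · rw [hgh.apply_of_notMem hj, X_mul_X_add_one]

lemma midEdgeMonom_mul (hgh : GlovePair F a g h) :
    midEdgeMonom n g.1 * midEdgeMonom n h.1 =
      (∏ j ∈ Oset n F, X (n + j, 0) * X (n + j, 1)) *
        ∏ j ∈ Eset n F, X (n + j, psum1 g.1 j) ^ 2 := by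
  rw [midEdgeMonom, midEdgeMonom, ← prod_mul_distrib,
    ← prod_filter_not_mul_prod_filter _ fun j => Even (cardInit F j)]
  simp only [Nat.not_even_iff_odd]
  congr 1
  · refine prod_congr rfl fun j hj => ?_
    rw [hgh.psum1_right, (ZMod.natCast_eq_one_iff_odd).mpr (mem_filter.mp hj).2,
      X_mul_X_add_one]
  · refine prod_congr rfl fun j hj => ?_
    rw [hgh.psum1_right, (ZMod.natCast_eq_zero_iff_even).mpr (mem_filter.mp hj).2, add_zero, sq]

end GlovePair

/-- The exponent vector of `∏_{j ∈ 𝔼} (a^{n+j}_{u_j})²`; it encodes the even coloring `u|_𝔼`. -/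
def evenColoringExp (n : ℕ) (F : Finset (Fin n)) (u : ℕ → ZMod 2) : (ℕ × ZMod 2) →₀ ℕ :=
  ∑ j ∈ Eset n F, Finsupp.single (n + j, u j) 2

lemma prod_X_sq_eq_monomial_evenColoringExp (u : ℕ → ZMod 2) :
    ∏ j ∈ Eset n F, (X (n + j, u j) : Sn) ^ 2 = monomial (evenColoringExp n F u) 1 := by
  simp only [evenColoringExp, monomial_sum_one, X_pow_eq_monomial]

lemma evenColoringExp_apply {j : ℕ} (hj : j ∈ Eset n F) (u : ℕ → ZMod 2) (x : ZMod 2) :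
    evenColoringExp n F u (n + j, x) = if u j = x then 2 else 0 := by
  rw [evenColoringExp, Finsupp.finsetSum_apply, sum_eq_single_of_mem j hj]
  · simp only [Finsupp.single_apply, Prod.mk.injEq, true_and]
  · intro j' _ hne
    rw [Finsupp.single_apply, if_neg fun h => hne (by simp only [Prod.mk.injEq] at h; omega)]

lemma evenColoringExp_eq_iff (u v : ℕ → ZMod 2) :
    evenColoringExp n F u = evenColoringExp n F v ↔ ∀ j ∈ Eset n F, u j = v j := by
  refine ⟨fun huv j hj => ?_, fun huv => sum_congr rfl fun j hj => by rw [huv j hj]⟩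
  have := DFunLike.congr_fun huv (n + j, v j)
  rw [evenColoringExp_apply hj, evenColoringExp_apply hj, if_pos rfl] at this
  by_contra hne
  simp [hne] at this

def gloveFactor (n : ℕ) (F : Finset (Fin n)) (a : Fin n → ZMod 2) : Sn :=
  (X (n + 1, 0) + X (n + n, 0)) ^ 2 *
    (∏ j : Fin n,
      if j ∈ F then X ((j : ℕ) + 1, a j) ^ 2 else X ((j : ℕ) + 1, 0) * X ((j : ℕ) + 1, 1)) *
    ∏ j ∈ Oset n F, X (n + j, 0) * X (n + j, 1)

lemma gloveFactor_ne_zero : gloveFactor n F a ≠ 0 := by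
  intro h
  simpa [gloveFactor, apply_ite (eval fun _ => (1 : ℂ))] using
    congrArg (eval fun _ => (1 : ℂ)) h

lemma ψsunlet_X_mul_X (hn : 2 ≤ n) (h1 : (⟨0, by omega⟩ : Fin n) ∈ F) (ha : a ⟨0, by omega⟩ = 0)
    {g h : Gn n} (hgh : GlovePair F a g h) :
    ψsunlet n (X g * X h) = gloveFactor n F a * monomial (evenColoringExp n F (psum1 g.1)) 1 := by
  rw [map_mul, ψsunlet_X_of_apply_zero hn ((hgh.1 _ h1).trans ha),
    ψsunlet_X_of_apply_zero hn ((hgh.2.1 _ h1).trans ha), ← prod_X_sq_eq_monomial_evenColoringExp,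
    gloveFactor, ← hgh.leafMonom_mul]
  linear_combination (X (n + 1, 0) + X (n + n, 0)) ^ 2 * leafMonom g.1 * leafMonom h.1 *
    hgh.midEdgeMonom_mul

lemma sum_ite_glovePair_lexLe {M : Type*} [AddCommMonoid M] (g : Gn n) (x : M) :
    ∑ h : Gn n, (if GlovePair F a g h ∧ lexLe g.1 h.1 then x else 0) =
      if Lmem F a g then x else 0 := by
  split_ifs with hg
  · obtain ⟨h₀, hgh₀, hle₀⟩ := hg
    rw [sum_eq_single_of_mem h₀ (mem_univ _), if_pos ⟨hgh₀, hle₀⟩]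
    intro h _ hne
    exact if_neg fun hgh => hne (hgh.1.unique hgh₀)
  · exact sum_eq_zero fun h _ => if_neg fun hgh => hg ⟨h, hgh⟩

lemma ψsunlet_gloveElt (hn : 2 ≤ n) (h1 : (⟨0, by omega⟩ : Fin n) ∈ F)
    (ha : a ⟨0, by omega⟩ = 0) (c : Gn n → ℂ) :
    ψsunlet n (gloveElt F a c) = gloveFactor n F a *
      ∑ g : Gn n, monomial (evenColoringExp n F (psum1 g.1)) (if Lmem F a g then c g else 0) := by
  rw [gloveElt, map_sum, mul_sum]
  refine sum_congr rfl fun g _ => ?_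
  have hterm : ∀ h : Gn n,
      ψsunlet n ((if GlovePair F a g h ∧ lexLe g.1 h.1 then c g else 0) • (X g * X h)) =
        (if GlovePair F a g h ∧ lexLe g.1 h.1 then c g else 0) •
          (gloveFactor n F a * monomial (evenColoringExp n F (psum1 g.1)) 1) := fun h => by
    split_ifs with hgh
    · rw [map_smul, ψsunlet_X_mul_X hn h1 ha hgh.1]
    · simp only [zero_smul, map_zero]
  rw [map_sum, sum_congr rfl fun h _ => hterm h, ← sum_smul, sum_ite_glovePair_lexLe,
    ← mul_smul_comm, smul_monomial, smul_eq_mul, mul_one]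

end Sunlet

/-- Theorem 4.4 (main theorem), second case: if leaf 1 is in `F` with `a_1 = 0`,
then `J_n ∩ G(n,F,a) = ker M_𝔼`. -/
theorem sunlet_glove_kernel_ret (n : ℕ) (hn : 4 ≤ n) (F : Finset (Fin n)) (a : Fin n → ZMod 2)
    (h1 : (⟨0, by omega⟩ : Fin n) ∈ F) (ha : a ⟨0, by omega⟩ = 0)
    (c : Gn n → ℂ) :
    gloveElt F a c ∈ Jsunlet n ↔ MEkerCond F a c := by
  rw [Jsunlet, RingHom.mem_ker, ψsunlet_gloveElt (by omega) h1 ha, mul_eq_zero,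
    or_iff_right gloveFactor_ne_zero, sum_monomial_eq_zero_iff,
    forall_sum_filter_comp_eq_zero_iff, MEkerCond]
  refine forall_congr' fun v => ?_
  rw [sum_filter]
  refine Eq.congr_left (sum_congr rfl fun g _ => ?_)
  simp only [evenColoringExp_eq_iff, ite_and]
  split_ifs <;> rfl
end
end

section
/- For every even integer n ≥ 4, the ℂ-vector space J_n ∩ G(n,∅) has dimension (2^{n/2 − 1} − 1)^2. -/
noncomputable section

open MvPolynomial Finset

/-!
Write `n = 2m` and `N = 2^(m-1)`. The glove `G(n,∅)` has the basis `q_g q_ḡ`, where `ḡ` is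
the complement of `g` and `g₁ = 0`. Such a `g` is determined by its partial sums
`s_j = g₁ + ⋯ + g_j`, that is by `e = (s_2, s_4, …, s_{n-2})` and
`o = (s_3, s_5, …, s_{n-1})`, so the glove has dimension `N²`. The partial sums of `ḡ` are
`s_j + j`, so in each of the four monomials of
`ψ_n(q_g q_ḡ) = (ψ_{T_0} + ψ_{T_1})(q_g) · (ψ_{T_0} + ψ_{T_1})(q_ḡ)` the inner edge `j`
contributes either `a_0 a_1` or a square `a_{s_j}²`, and the squares only see `e` (for
`T_0 T_0` and `T_1 T_0`) or only `o` (for `T_1 T_1` and `T_0 T_1`). Hence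
`ψ_n(q_g q_ḡ) = u_e + w_o` for `2N` polynomials `u_e`, `w_o`, which are linearly independent
because the `T_0 T_0` monomial of `u_e` and the `T_1 T_1` monomial of `w_o` determine `e`,
resp. `o`, and occur nowhere else. So the image of the glove has dimension `2N - 1`, and the
kernel has dimension `N² - (2N - 1) = (N - 1)²`.
-/

section LinearAlgebra

variable {K V W : Type*} [Field K] [AddCommGroup V] [Module K V] [AddCommGroup W] [Module K W]

theorem Submodule.finrank_inf_ker_add_finrank_map (U : Submodule K V) [FiniteDimensional K U]
    (f : V →ₗ[K] W) :
    Module.finrank K ↥(U ⊓ LinearMap.ker f) + Module.finrank K ↥(U.map f) =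
      Module.finrank K U := by
  have h := (f.domRestrict U).finrank_range_add_finrank_ker
  rw [LinearMap.range_domRestrict, LinearMap.ker_domRestrict, ← finrank_map_subtype_eq,
    map_comap_subtype] at h
  omega

theorem LinearIndependent.finrank_span_range_add_add_one {α β : Type*} [Fintype α] [Fintype β]
    [Nonempty α] [Nonempty β] {u : α → V} {w : β → V}
    (h : LinearIndependent K (Sum.elim u w)) :
    Module.finrank K ↥(Submodule.span K (Set.range fun p : α × β => u p.1 + w p.2)) + 1 =
      Fintype.card α + Fintype.card β := by
  classical
  obtain ⟨a₀⟩ := ‹Nonempty α›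
  obtain ⟨b₀⟩ := ‹Nonempty β›
  set S := Submodule.span K (Set.range fun p : α × β => u p.1 + w p.2)
  have hS : ∀ a b, u a + w b ∈ S := fun a b => Submodule.subset_span ⟨(a, b), rfl⟩
  let v : α ⊕ {b // b ≠ b₀} → V := Sum.elim (fun a => u a + w b₀) fun b => w b - w b₀
  have hSv : S ≤ Submodule.span K (Set.range v) := by
    rw [Submodule.span_le]
    rintro _ ⟨⟨a, b⟩, rfl⟩
    have ha : u a + w b₀ ∈ Submodule.span K (Set.range v) :=
      Submodule.subset_span ⟨.inl a, rfl⟩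
    by_cases hb : b = b₀
    · simpa [hb] using ha
    · have hb' : w b - w b₀ ∈ Submodule.span K (Set.range v) :=
        Submodule.subset_span ⟨.inr ⟨b, hb⟩, rfl⟩
      simpa using add_mem ha hb'
  have hle : Submodule.span K (Set.range (Sum.elim u w)) ≤ S ⊔ K ∙ w b₀ := by
    rw [Submodule.span_le]
    rintro _ ⟨a | b, rfl⟩
    · simpa using Submodule.sub_mem_sup (hS a b₀) (Submodule.mem_span_singleton_self (w b₀))
    · have := Submodule.add_mem_sup (sub_mem (hS a₀ b) (hS a₀ b₀))
        (Submodule.mem_span_singleton_self (w b₀))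
      simpa using this
  have : FiniteDimensional K ↥(Submodule.span K (Set.range v)) :=
    FiniteDimensional.span_of_finite K (Set.finite_range v)
  have : FiniteDimensional K S := Submodule.finiteDimensional_of_le hSv
  have hupper : Module.finrank K S ≤ Fintype.card α + (Fintype.card β - 1) := by
    calc Module.finrank K S ≤ Module.finrank K ↥(Submodule.span K (Set.range v)) :=
          Submodule.finrank_mono hSv
      _ ≤ Fintype.card (α ⊕ {b // b ≠ b₀}) := finrank_range_le_card v
      _ = _ := by simp [Fintype.card_subtype_compl]
  have hlower : Fintype.card α + Fintype.card β ≤ Module.finrank K S + 1 := by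
    calc Fintype.card α + Fintype.card β = Fintype.card (α ⊕ β) := Fintype.card_sum.symm
      _ = Module.finrank K ↥(Submodule.span K (Set.range (Sum.elim u w))) :=
          (finrank_span_eq_card h).symm
      _ ≤ Module.finrank K ↥(S ⊔ K ∙ w b₀) := Submodule.finrank_mono hle
      _ ≤ Module.finrank K S + Module.finrank K ↥(K ∙ w b₀) :=
          Submodule.finrank_add_le_finrank_add_finrank _ _
      _ ≤ Module.finrank K S + 1 := by
          gcongr; exact (finrank_span_le_card ({w b₀} : Set V)).trans (by simp)
  have : 0 < Fintype.card β := Fintype.card_pos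
  omega

end LinearAlgebra

section PartialSums

variable {n : ℕ}

theorem psum1_zero (g : Fin n → ZMod 2) : psum1 g 0 = 0 := by
  simp [psum1]

theorem psum1_succ (g : Fin n → ZMod 2) {j : ℕ} (hj : j < n) :
    psum1 g (j + 1) = psum1 g j + g ⟨j, hj⟩ := by
  have : (univ.filter fun i : Fin n => (i : ℕ) < j + 1) =
      insert ⟨j, hj⟩ (univ.filter fun i : Fin n => (i : ℕ) < j) := by
    ext i
    simp only [mem_filter, mem_univ, true_and, mem_insert, Fin.ext_iff]
    omega
  rw [psum1, psum1, this, sum_insert (by simp), add_comm]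

theorem psum1_length (g : Fin n → ZMod 2) : psum1 g n = ∑ i, g i := by
  simp [psum1]

theorem psum1_eq_psum1_one_add_psum2 (g : Fin n → ZMod 2) {j : ℕ} (hj : 1 ≤ j) :
    psum1 g j = psum1 g 1 + psum2 g j := by
  rw [psum1, ← sum_filter_add_sum_filter_not _ fun i : Fin n => (i : ℕ) < 1, psum1, psum2,
    filter_filter, filter_filter]
  congr 2 <;> ext i <;> simp only [mem_filter, mem_univ, true_and] <;> omega

def flipBits (g : Fin n → ZMod 2) : Fin n → ZMod 2 := fun i => g i + 1

theorem psum1_flipBits (g : Fin n → ZMod 2) {j : ℕ} (hj : j ≤ n) :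
    psum1 (flipBits g) j = psum1 g j + j := by
  induction j with
  | zero => simp [psum1_zero]
  | succ j ih =>
    rw [psum1_succ _ (by omega), psum1_succ _ (by omega), ih (by omega), flipBits]
    push_cast
    ring

end PartialSums

section Flip

variable {m : ℕ}

def Gn.flip (g : Gn (2 * m)) : Gn (2 * m) :=
  ⟨flipBits g.1, by
    rw [← psum1_length, psum1_flipBits _ le_rfl, psum1_length, g.2,
      ZMod.natCast_eq_zero_iff_even.2 (even_two_mul m), add_zero]⟩

theorem Gn.flip_val (g : Gn (2 * m)) : g.flip.1 = flipBits g.1 := rfl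

theorem Gn.flip_flip (g : Gn (2 * m)) : g.flip.flip = g := by
  ext i
  exact CharTwo.add_cancel_right (g.1 i) 1

theorem glovePair_empty_zero_iff (g h : Gn (2 * m)) :
    GlovePair ∅ 0 g h ↔ h = g.flip := by
  have key : ∀ a b : ZMod 2, a + b = 1 ↔ b = a + 1 := by decide
  simp only [GlovePair, notMem_empty, IsEmpty.forall_iff, implies_true, not_false_eq_true,
    forall_const, true_and, key, Subtype.ext_iff, funext_iff]
  rfl

theorem psum1_flip_one (hm : 1 ≤ m) (g : Gn (2 * m)) :
    psum1 g.flip.1 1 = psum1 g.1 1 + 1 := by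
  rw [Gn.flip_val, psum1_flipBits _ (by omega), Nat.cast_one]

end Flip

section Coordinates

variable {m : ℕ}

abbrev Coord (m : ℕ) : Type := Fin (m - 1) → ZMod 2

def evenSums (g : Fin (2 * m) → ZMod 2) : Coord m := fun k => psum1 g (2 * k + 2)

def oddSums (g : Fin (2 * m) → ZMod 2) : Coord m := fun k => psum1 g (2 * k + 3)

def evenProfile (e : Coord m) (j : ℕ) : ZMod 2 :=
  if h : 2 ≤ j ∧ j + 2 ≤ 2 * m ∧ j % 2 = 0 then e ⟨j / 2 - 1, by omega⟩ else 0

def oddProfile (o : Coord m) (j : ℕ) : ZMod 2 :=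
  if h : 3 ≤ j ∧ j + 1 ≤ 2 * m ∧ j % 2 = 1 then o ⟨(j - 3) / 2, by omega⟩ else 0

theorem evenProfile_apply (e : Coord m) (k : Fin (m - 1)) :
    evenProfile e (2 * k + 2) = e k := by
  rw [evenProfile, dif_pos (by omega)]
  congr
  omega

theorem oddProfile_apply (o : Coord m) (k : Fin (m - 1)) :
    oddProfile o (2 * k + 3) = o k := by
  rw [oddProfile, dif_pos (by omega)]
  congr
  omega

theorem evenProfile_of_odd (e : Coord m) {j : ℕ} (hj : j % 2 = 1) : evenProfile e j = 0 :=
  dif_neg (by omega)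

theorem oddProfile_of_even (o : Coord m) {j : ℕ} (hj : j % 2 = 0) : oddProfile o j = 0 :=
  dif_neg (by omega)

def bitsOfSums (e o : Coord m) : Fin (2 * m) → ZMod 2 := fun i =>
  evenProfile e (i + 1) + oddProfile o (i + 1) + (evenProfile e i + oddProfile o i)

theorem psum1_bitsOfSums (e o : Coord m) {j : ℕ} (hj : j ≤ 2 * m) :
    psum1 (bitsOfSums e o) j = evenProfile e j + oddProfile o j := by
  induction j with
  | zero => simp [psum1_zero, evenProfile, oddProfile]
  | succ j ih =>
    rw [psum1_succ _ (by omega), ih (by omega), bitsOfSums]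
    grind

theorem evenSums_bitsOfSums (e o : Coord m) : evenSums (bitsOfSums e o) = e := by
  ext k
  rw [evenSums, psum1_bitsOfSums _ _ (by omega), evenProfile_apply, oddProfile_of_even _ (by omega),
    add_zero]

theorem oddSums_bitsOfSums (e o : Coord m) : oddSums (bitsOfSums e o) = o := by
  ext k
  rw [oddSums, psum1_bitsOfSums _ _ (by omega), oddProfile_apply, evenProfile_of_odd _ (by omega),
    zero_add]

theorem psum1_bitsOfSums_one (e o : Coord m) : psum1 (bitsOfSums e o) 1 = 0 := by
  rcases Nat.eq_zero_or_pos m with rfl | hm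
  · simp [psum1]
  · rw [psum1_bitsOfSums _ _ (by omega)]
    simp [evenProfile, oddProfile]

def Gn.ofSums (e o : Coord m) : Gn (2 * m) :=
  ⟨bitsOfSums e o, by
    rw [← psum1_length, psum1_bitsOfSums _ _ le_rfl]
    simp [evenProfile, oddProfile]⟩

theorem psum1_eq_profile (g : Gn (2 * m)) (hg : psum1 g.1 1 = 0) {j : ℕ} (hj : j ≤ 2 * m) :
    psum1 g.1 j = evenProfile (evenSums g.1) j + oddProfile (oddSums g.1) j := by
  rcases Nat.even_or_odd' j with ⟨k, rfl | rfl⟩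
  · rw [oddProfile_of_even _ (by omega), add_zero]
    by_cases hk : k = 0 ∨ k = m
    · rcases hk with rfl | rfl
      · simp [psum1_zero, evenProfile]
      · rw [psum1_length, g.2, evenProfile, dif_neg (by omega)]
    · rw [evenProfile, dif_pos (by omega), evenSums]
      congr 1
      dsimp only
      omega
  · rw [evenProfile_of_odd _ (by omega), zero_add]
    by_cases hk : k = 0
    · subst hk
      simp [hg, oddProfile]
    · rw [oddProfile, dif_pos (by omega), oddSums]
      congr 1
      dsimp only
      omega

theorem Gn.ofSums_evenSums_oddSums (g : Gn (2 * m)) (hg : psum1 g.1 1 = 0) :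
    Gn.ofSums (evenSums g.1) (oddSums g.1) = g := by
  ext i
  have hi := i.isLt
  simp only [Gn.ofSums, bitsOfSums]
  rw [← psum1_eq_profile g hg (by omega), ← psum1_eq_profile g hg (by omega), psum1_succ _ hi]
  grind

end Coordinates

section GloveBasis

variable {m : ℕ}

def gloveBasis (m : ℕ) (p : Coord m × Coord m) : Rn (2 * m) :=
  X (Gn.ofSums p.1 p.2) * X (Gn.ofSums p.1 p.2).flip

theorem glove_empty_eq_span (hm : 1 ≤ m) :
    glove (∅ : Finset (Fin (2 * m))) 0 = Submodule.span ℂ (Set.range (gloveBasis m)) := by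
  apply le_antisymm
  · rw [glove, Submodule.span_le]
    rintro _ ⟨g, h, hgh, rfl⟩
    rw [(glovePair_empty_zero_iff g h).1 hgh]
    apply Submodule.subset_span
    -- exactly one of `g` and its complement has `g₁ = 0`
    by_cases hg : psum1 g.1 1 = 0
    · exact ⟨(evenSums g.1, oddSums g.1), by rw [gloveBasis, Gn.ofSums_evenSums_oddSums g hg]⟩
    · have hg' : psum1 g.flip.1 1 = 0 := by
        rw [psum1_flip_one hm]
        exact (by decide : ∀ c : ZMod 2, c ≠ 0 → c + 1 = 0) _ hg
      refine ⟨(evenSums g.flip.1, oddSums g.flip.1), ?_⟩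
      rw [gloveBasis, Gn.ofSums_evenSums_oddSums _ hg', Gn.flip_flip]
      exact mul_comm _ _
  · rw [Submodule.span_le]
    rintro _ ⟨p, rfl⟩
    exact Submodule.subset_span ⟨_, _, (glovePair_empty_zero_iff _ _).2 rfl, rfl⟩

theorem linearIndependent_gloveBasis (hm : 1 ≤ m) : LinearIndependent ℂ (gloveBasis m) := by
  have hbasis : gloveBasis m = (basisMonomials (Gn (2 * m)) ℂ) ∘ fun p =>
      Finsupp.single (Gn.ofSums p.1 p.2) 1 + Finsupp.single (Gn.ofSums p.1 p.2).flip 1 := by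
    ext1 p
    simp [gloveBasis, X, monomial_mul]
  rw [hbasis]
  refine (basisMonomials _ ℂ).linearIndependent.comp _ fun p q hpq => ?_
  have hflip : ∀ r s : Coord m × Coord m, (Gn.ofSums r.1 r.2).flip ≠ Gn.ofSums s.1 s.2 := by
    intro r s h
    have := congrArg (fun g : Gn (2 * m) => psum1 g.1 1) h
    simp [psum1_flip_one hm, Gn.ofSums, psum1_bitsOfSums_one] at this
  have heq : Gn.ofSums p.1 p.2 = Gn.ofSums q.1 q.2 := by
    have := DFunLike.congr_fun hpq (Gn.ofSums p.1 p.2)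
    by_contra hne
    simp [hflip, hne] at this
  have he := congrArg (fun g : Gn (2 * m) => evenSums g.1) heq
  have ho := congrArg (fun g : Gn (2 * m) => oddSums g.1) heq
  simp only [Gn.ofSums, evenSums_bitsOfSums, oddSums_bitsOfSums] at he ho
  exact Prod.ext he ho

end GloveBasis

theorem MvPolynomial.prod_X_eq_monomial {σ α R : Type*} [CommSemiring R] (s : Finset α)
    (f : α → σ) :
    ∏ i ∈ s, (X (f i) : MvPolynomial σ R) =
      monomial (∑ i ∈ s, Finsupp.single (f i) 1) 1 := by
  rw [monomial_sum_one]
  rfl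

section Exponents

variable {n : ℕ}

def leafExp (g : Fin n → ZMod 2) : (ℕ × ZMod 2) →₀ ℕ :=
  ∑ j : Fin n, Finsupp.single ((j : ℕ) + 1, g j) 1

def tree0Exp (g : Fin n → ZMod 2) : (ℕ × ZMod 2) →₀ ℕ :=
  ∑ j ∈ Icc 1 (n - 1), Finsupp.single (n + j, psum1 g j) 1

def tree1Exp (g : Fin n → ZMod 2) : (ℕ × ZMod 2) →₀ ℕ :=
  ∑ j ∈ Icc 2 n, Finsupp.single (n + j, psum2 g j) 1

theorem tree0Monom_eq (g : Fin n → ZMod 2) :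
    tree0Monom g = monomial (leafExp g + tree0Exp g) 1 := by
  rw [tree0Monom, leafMonom, prod_X_eq_monomial, prod_X_eq_monomial, monomial_mul, one_mul]
  rfl

theorem tree1Monom_eq (g : Fin n → ZMod 2) :
    tree1Monom g = monomial (leafExp g + tree1Exp g) 1 := by
  rw [tree1Monom, leafMonom, prod_X_eq_monomial, prod_X_eq_monomial, monomial_mul, one_mul]
  rfl

def blockExp (x : ℕ) (c t : ZMod 2) : (ℕ × ZMod 2) →₀ ℕ :=
  Finsupp.single (x, c) 1 + Finsupp.single (x, c + t) 1

theorem blockExp_congr (x : ℕ) {c c' t : ZMod 2} (h : t = 1 ∨ c = c') :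
    blockExp x c t = blockExp x c' t := by
  rcases h with rfl | rfl
  · have key : ∀ c : ZMod 2,
        blockExp x c 1 = Finsupp.single (x, 0) 1 + Finsupp.single (x, 1) 1 := by
      intro c
      fin_cases c
      · rfl
      · exact add_comm _ _
    rw [key, key]
  · rfl

theorem blockExp_apply (x : ℕ) (c t c' : ZMod 2) :
    blockExp x c t (x, c') = (if c = c' then 1 else 0) + if c + t = c' then 1 else 0 := by
  simp [blockExp, Finsupp.single_apply]

def leafPairExp (n : ℕ) : (ℕ × ZMod 2) →₀ ℕ := ∑ j : Fin n, blockExp (j + 1) 0 1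

theorem leafExp_add_leafExp_flipBits (g : Fin n → ZMod 2) :
    leafExp g + leafExp (flipBits g) = leafPairExp n := by
  rw [leafExp, leafExp, leafPairExp, ← sum_add_distrib]
  exact sum_congr rfl fun j _ => blockExp_congr _ (Or.inl rfl)

theorem leafPairExp_apply_of_lt {x : ℕ} (hx : n < x) (c : ZMod 2) :
    leafPairExp n (x, c) = 0 := by
  rw [leafPairExp, Finsupp.finsetSum_apply]
  refine sum_eq_zero fun j _ => ?_
  simp only [blockExp, Finsupp.add_apply, Finsupp.single_apply, Prod.mk.injEq]
  grind

theorem sum_blockExp_apply (I : Finset ℕ) (a : ℕ) (s t : ℕ → ZMod 2) (j₀ : ℕ)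
    (c : ZMod 2) :
    (∑ j ∈ I, blockExp (a + j) (s j) (t j)) (a + j₀, c) =
      if j₀ ∈ I then blockExp (a + j₀) (s j₀) (t j₀) (a + j₀, c) else 0 := by
  rw [Finsupp.finsetSum_apply]
  split_ifs with h
  · refine sum_eq_single_of_mem j₀ h fun j _ hj => ?_
    simp [blockExp, hj]
  · refine sum_eq_zero fun j hj => ?_
    have : j ≠ j₀ := by rintro rfl; exact h hj
    simp [blockExp, this]

end Exponents

section PairExponents

variable {m : ℕ}

def pairExp00 (e : Coord m) : (ℕ × ZMod 2) →₀ ℕ :=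
  leafPairExp (2 * m) + ∑ j ∈ Icc 1 (2 * m - 1), blockExp (2 * m + j) (evenProfile e j) j

def pairExp11 (o : Coord m) : (ℕ × ZMod 2) →₀ ℕ :=
  leafPairExp (2 * m) + ∑ j ∈ Icc 2 (2 * m), blockExp (2 * m + j) (oddProfile o j) (j + 1)

def pairExp01 (o : Coord m) : (ℕ × ZMod 2) →₀ ℕ :=
  leafPairExp (2 * m) + (Finsupp.single (2 * m + 1, 0) 1 + Finsupp.single (2 * m + 2 * m, 1) 1 +
    ∑ j ∈ Icc 2 (2 * m - 1), blockExp (2 * m + j) (oddProfile o j) (j + 1))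

def pairExp10 (e : Coord m) : (ℕ × ZMod 2) →₀ ℕ :=
  leafPairExp (2 * m) + (Finsupp.single (2 * m + 1, 1) 1 + Finsupp.single (2 * m + 2 * m, 0) 1 +
    ∑ j ∈ Icc 2 (2 * m - 1), blockExp (2 * m + j) (evenProfile e j) j)

theorem tree0Exp_eq_single_add (hm : 1 ≤ m) (g : Fin (2 * m) → ZMod 2) :
    tree0Exp g = Finsupp.single (2 * m + 1, psum1 g 1) 1 +
      ∑ j ∈ Icc 2 (2 * m - 1), Finsupp.single (2 * m + j, psum1 g j) 1 := by
  have : Icc 1 (2 * m - 1) = insert 1 (Icc 2 (2 * m - 1)) := by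
    ext
    simp only [mem_Icc, mem_insert]
    omega
  rw [tree0Exp, this, sum_insert (by simp)]

theorem tree1Exp_eq_single_add (hm : 1 ≤ m) (g : Fin (2 * m) → ZMod 2) :
    tree1Exp g = Finsupp.single (2 * m + 2 * m, psum2 g (2 * m)) 1 +
      ∑ j ∈ Icc 2 (2 * m - 1), Finsupp.single (2 * m + j, psum2 g j) 1 := by
  have : Icc 2 (2 * m) = insert (2 * m) (Icc 2 (2 * m - 1)) := by
    ext
    simp only [mem_Icc, mem_insert]
    omega
  rw [tree1Exp, this, sum_insert (by rw [mem_Icc]; omega)]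

variable (g : Gn (2 * m)) (hg : psum1 g.1 1 = 0)
include hg

theorem cast_eq_one_or_psum1_eq_evenProfile {j : ℕ} (hj : j ≤ 2 * m) :
    (j : ZMod 2) = 1 ∨ psum1 g.1 j = evenProfile (evenSums g.1) j := by
  rcases Nat.even_or_odd j with h | h
  · right
    rw [psum1_eq_profile g hg hj, oddProfile_of_even _ (Nat.even_iff.1 h), add_zero]
  · exact Or.inl (ZMod.natCast_eq_one_iff_odd.2 h)

theorem cast_add_one_eq_one_or_psum1_eq_oddProfile {j : ℕ} (hj : j ≤ 2 * m) :
    (j : ZMod 2) + 1 = 1 ∨ psum1 g.1 j = oddProfile (oddSums g.1) j := by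
  rcases Nat.even_or_odd j with h | h
  · left
    rw [ZMod.natCast_eq_zero_iff_even.2 h, zero_add]
  · right
    rw [psum1_eq_profile g hg hj, evenProfile_of_odd _ (Nat.odd_iff.1 h), zero_add]

theorem psum2_eq_psum1_s3 {j : ℕ} (hj : 1 ≤ j) : psum2 g.1 j = psum1 g.1 j := by
  rw [psum1_eq_psum1_one_add_psum2 _ hj, hg, zero_add]

theorem psum2_flipBits {j : ℕ} (hj : 1 ≤ j) (hjm : j ≤ 2 * m) :
    psum2 (flipBits g.1) j = psum1 g.1 j + (j + 1) := by
  have h := psum1_eq_psum1_one_add_psum2 g.flip.1 hj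
  rw [psum1_flip_one (by omega), hg, zero_add, Gn.flip_val, psum1_flipBits _ hjm] at h
  grind

theorem tree0Monom_mul_tree0Monom_flip :
    tree0Monom g.1 * tree0Monom g.flip.1 = monomial (pairExp00 (evenSums g.1)) 1 := by
  rw [tree0Monom_eq, tree0Monom_eq, monomial_mul, one_mul]
  refine congrArg (monomial · 1) ?_
  rw [add_add_add_comm, Gn.flip_val,
    leafExp_add_leafExp_flipBits, pairExp00, tree0Exp, tree0Exp, ← sum_add_distrib]
  congr 1
  refine sum_congr rfl fun j hj => ?_
  rw [mem_Icc] at hj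
  rw [psum1_flipBits _ (by omega)]
  exact blockExp_congr _ (cast_eq_one_or_psum1_eq_evenProfile g hg (by omega))

theorem tree1Monom_mul_tree1Monom_flip :
    tree1Monom g.1 * tree1Monom g.flip.1 = monomial (pairExp11 (oddSums g.1)) 1 := by
  rw [tree1Monom_eq, tree1Monom_eq, monomial_mul, one_mul]
  refine congrArg (monomial · 1) ?_
  rw [add_add_add_comm, Gn.flip_val,
    leafExp_add_leafExp_flipBits, pairExp11, tree1Exp, tree1Exp, ← sum_add_distrib]
  congr 1
  refine sum_congr rfl fun j hj => ?_
  rw [mem_Icc] at hj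
  rw [psum2_eq_psum1_s3 g hg (by omega), psum2_flipBits g hg (by omega) hj.2]
  exact blockExp_congr _ (cast_add_one_eq_one_or_psum1_eq_oddProfile g hg hj.2)

theorem tree0Monom_mul_tree1Monom_flip (hm : 1 ≤ m) :
    tree0Monom g.1 * tree1Monom g.flip.1 = monomial (pairExp01 (oddSums g.1)) 1 := by
  rw [tree0Monom_eq, tree1Monom_eq, monomial_mul, one_mul]
  refine congrArg (monomial · 1) ?_
  rw [add_add_add_comm, Gn.flip_val,
    leafExp_add_leafExp_flipBits, pairExp01, tree0Exp_eq_single_add hm,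
    tree1Exp_eq_single_add hm, add_add_add_comm, ← sum_add_distrib, hg,
    psum2_flipBits g hg (by omega) le_rfl, psum1_length, g.2,
    ZMod.natCast_eq_zero_iff_even.2 (even_two_mul m), zero_add, zero_add]
  congr 2
  refine sum_congr rfl fun j hj => ?_
  rw [mem_Icc] at hj
  rw [psum2_flipBits g hg (by omega) (by omega)]
  exact blockExp_congr _ (cast_add_one_eq_one_or_psum1_eq_oddProfile g hg (by omega))

theorem tree1Monom_mul_tree0Monom_flip (hm : 1 ≤ m) :
    tree1Monom g.1 * tree0Monom g.flip.1 = monomial (pairExp10 (evenSums g.1)) 1 := by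
  rw [tree1Monom_eq, tree0Monom_eq, monomial_mul, one_mul]
  refine congrArg (monomial · 1) ?_
  rw [add_add_add_comm, Gn.flip_val,
    leafExp_add_leafExp_flipBits, pairExp10, tree0Exp_eq_single_add hm,
    tree1Exp_eq_single_add hm, add_add_add_comm, ← sum_add_distrib,
    psum2_eq_psum1_s3 g hg (by omega), psum1_length, g.2, psum1_flipBits _ (by omega), hg,
    Nat.cast_one, zero_add, add_comm (Finsupp.single _ _)]
  congr 2
  refine sum_congr rfl fun j hj => ?_
  rw [mem_Icc] at hj
  rw [psum2_eq_psum1_s3 g hg (by omega), psum1_flipBits _ (by omega)]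
  exact blockExp_congr _ (cast_eq_one_or_psum1_eq_evenProfile g hg (by omega))

end PairExponents

section Markers

variable {m : ℕ}

def markers (m : ℕ) (d : (ℕ × ZMod 2) →₀ ℕ) : ℕ × ℕ :=
  (d (2 * m + 1, 0), d (2 * m + 2 * m, 1))

variable (hm : 1 ≤ m)
include hm

theorem markers_leafPairExp_add (d : (ℕ × ZMod 2) →₀ ℕ) :
    markers m (leafPairExp (2 * m) + d) = markers m d := by
  simp only [markers, Finsupp.add_apply, zero_add,
    leafPairExp_apply_of_lt (by omega : 2 * m < 2 * m + 1),
    leafPairExp_apply_of_lt (by omega : 2 * m < 2 * m + 2 * m)]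

theorem markers_pairExp00 (e : Coord m) : markers m (pairExp00 e) = (1, 0) := by
  rw [pairExp00, markers_leafPairExp_add hm, markers]
  simp only [sum_blockExp_apply, blockExp_apply, mem_Icc, evenProfile_of_odd e (j := 1) rfl]
  grind

theorem markers_pairExp11 (o : Coord m) : markers m (pairExp11 o) = (0, 1) := by
  rw [pairExp11, markers_leafPairExp_add hm, markers]
  simp only [sum_blockExp_apply, blockExp_apply, mem_Icc,
    oddProfile_of_even o (by omega : 2 * m % 2 = 0),
    ZMod.natCast_eq_zero_iff_even.2 (even_two_mul m)]
  grind

theorem markers_pairExp01 (o : Coord m) : markers m (pairExp01 o) = (1, 1) := by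
  rw [pairExp01, markers_leafPairExp_add hm, markers]
  simp only [Finsupp.add_apply, sum_blockExp_apply, mem_Icc, Finsupp.single_apply]
  grind

theorem markers_pairExp10 (e : Coord m) : markers m (pairExp10 e) = (0, 0) := by
  rw [pairExp10, markers_leafPairExp_add hm, markers]
  simp only [Finsupp.add_apply, sum_blockExp_apply, mem_Icc, Finsupp.single_apply]
  grind

end Markers

section Injective

variable {m : ℕ}

theorem pairExp00_apply (e : Coord m) (k : Fin (m - 1)) (c : ZMod 2) :
    pairExp00 e (2 * m + (2 * k + 2), c) = if e k = c then 2 else 0 := by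
  have hk := k.isLt
  rw [pairExp00, Finsupp.add_apply, leafPairExp_apply_of_lt (by omega), sum_blockExp_apply,
    if_pos (mem_Icc.2 ⟨by omega, by omega⟩), blockExp_apply, evenProfile_apply,
    ZMod.natCast_eq_zero_iff_even.2 ⟨k + 1, by ring⟩, add_zero]
  split_ifs <;> rfl

theorem pairExp11_apply (o : Coord m) (k : Fin (m - 1)) (c : ZMod 2) :
    pairExp11 o (2 * m + (2 * k + 3), c) = if o k = c then 2 else 0 := by
  have hk := k.isLt
  rw [pairExp11, Finsupp.add_apply, leafPairExp_apply_of_lt (by omega), sum_blockExp_apply,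
    if_pos (mem_Icc.2 ⟨by omega, by omega⟩), blockExp_apply, oddProfile_apply,
    ZMod.natCast_eq_one_iff_odd.2 ⟨k + 1, by ring⟩, CharTwo.add_self_eq_zero, add_zero]
  split_ifs <;> rfl

theorem pairExp00_injective : Function.Injective (pairExp00 (m := m)) := by
  intro e e' h
  ext k
  have := DFunLike.congr_fun h (2 * m + (2 * k + 2), e k)
  rw [pairExp00_apply, pairExp00_apply, if_pos rfl] at this
  by_contra hne
  rw [if_neg (Ne.symm hne)] at this
  exact two_ne_zero this

theorem pairExp11_injective : Function.Injective (pairExp11 (m := m)) := by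
  intro o o' h
  ext k
  have := DFunLike.congr_fun h (2 * m + (2 * k + 3), o k)
  rw [pairExp11_apply, pairExp11_apply, if_pos rfl] at this
  by_contra hne
  rw [if_neg (Ne.symm hne)] at this
  exact two_ne_zero this

end Injective

section SunletImage

variable {m : ℕ}

def sunletEven (m : ℕ) (e : Coord m) : Sn := monomial (pairExp00 e) 1 + monomial (pairExp10 e) 1

def sunletOdd (m : ℕ) (o : Coord m) : Sn := monomial (pairExp11 o) 1 + monomial (pairExp01 o) 1

theorem ψsunlet_gloveBasis (hm : 1 ≤ m) (p : Coord m × Coord m) :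
    ψsunlet (2 * m) (gloveBasis m p) = sunletEven m p.1 + sunletOdd m p.2 := by
  set g := Gn.ofSums p.1 p.2
  have hg : psum1 g.1 1 = 0 := psum1_bitsOfSums_one p.1 p.2
  have he : evenSums g.1 = p.1 := evenSums_bitsOfSums p.1 p.2
  have ho : oddSums g.1 = p.2 := oddSums_bitsOfSums p.1 p.2
  rw [gloveBasis, map_mul, ψsunlet, aeval_X, aeval_X, add_mul, mul_add, mul_add,
    tree0Monom_mul_tree0Monom_flip g hg, tree0Monom_mul_tree1Monom_flip g hg hm,
    tree1Monom_mul_tree0Monom_flip g hg hm, tree1Monom_mul_tree1Monom_flip g hg, he, ho,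
    sunletEven, sunletOdd]
  abel

theorem linearIndependent_sunletEven_sunletOdd (hm : 1 ≤ m) :
    LinearIndependent ℂ (Sum.elim (sunletEven m) (sunletOdd m)) := by
  have h10 (e e' : Coord m) : pairExp10 e' ≠ pairExp00 e := fun h => by
    simpa [markers_pairExp00 hm, markers_pairExp10 hm] using congrArg (markers m) h
  have h11 (e o : Coord m) : pairExp11 o ≠ pairExp00 e := fun h => by
    simpa [markers_pairExp00 hm, markers_pairExp11 hm] using congrArg (markers m) h
  have h01 (e o : Coord m) : pairExp01 o ≠ pairExp00 e := fun h => by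
    simpa [markers_pairExp00 hm, markers_pairExp01 hm] using congrArg (markers m) h
  have h10' (e o : Coord m) : pairExp10 e ≠ pairExp11 o := fun h => by
    simpa [markers_pairExp11 hm, markers_pairExp10 hm] using congrArg (markers m) h
  have h01' (o o' : Coord m) : pairExp01 o' ≠ pairExp11 o := fun h => by
    simpa [markers_pairExp11 hm, markers_pairExp01 hm] using congrArg (markers m) h
  refine .of_pairwise_dual_eq_zero_one _
    (Sum.elim (fun e => lcoeff ℂ (pairExp00 e)) fun o => lcoeff ℂ (pairExp11 o)) ?_ ?_
  · rintro (e | o) (e' | o') hne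
    · have : e' ≠ e := fun h => hne (by rw [h])
      simp [sunletEven, h10, pairExp00_injective.eq_iff, this]
    · simp [sunletOdd, h11, h01]
    · simp [sunletEven, (h11 _ _).symm, h10']
    · have : o' ≠ o := fun h => hne (by rw [h])
      simp [sunletOdd, h01', pairExp11_injective.eq_iff, this]
  · rintro (e | o) <;> simp [sunletEven, sunletOdd, h10, h01']

end SunletImage

instance {n : ℕ} (F : Finset (Fin n)) (a : Fin n → ZMod 2) :
    FiniteDimensional ℂ ↥(glove F a) := by
  refine FiniteDimensional.span_of_finite ℂ <|
    (Set.finite_range fun p : Gn n × Gn n => (X p.1 * X p.2 : Rn n)).subset ?_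
  rintro _ ⟨g, h, -, rfl⟩
  exact ⟨(g, h), rfl⟩

theorem restrictScalars_Jsunlet (n : ℕ) :
    (Jsunlet n).restrictScalars ℂ = LinearMap.ker (ψsunlet n).toLinearMap :=
  rfl

section Dimension

variable {m : ℕ}

theorem card_coord : Fintype.card (Coord m) = 2 ^ (m - 1) := by
  simp

theorem finrank_glove_empty (hm : 1 ≤ m) :
    Module.finrank ℂ ↥(glove (∅ : Finset (Fin (2 * m))) 0) = 2 ^ (m - 1) * 2 ^ (m - 1) := by
  rw [glove_empty_eq_span hm, finrank_span_eq_card (linearIndependent_gloveBasis hm),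
    Fintype.card_prod, card_coord]

theorem map_glove_empty (hm : 1 ≤ m) :
    (glove (∅ : Finset (Fin (2 * m))) 0).map (ψsunlet (2 * m)).toLinearMap =
      Submodule.span ℂ
        (Set.range fun p : Coord m × Coord m => sunletEven m p.1 + sunletOdd m p.2) := by
  rw [glove_empty_eq_span hm, Submodule.map_span, ← Set.range_comp]
  exact congrArg _ (congrArg _ (funext (ψsunlet_gloveBasis hm)))

end Dimension

/-- Proposition 4.7 (first claim): for even `n ≥ 4`,
`dim_ℂ (J_n ∩ G(n,∅)) = (2^{n/2-1} - 1)^2`. -/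
theorem dim_sunlet_inter_empty_glove (n : ℕ) (hn : 4 ≤ n) (he : Even n) :
    Module.finrank ℂ
      ↥(Submodule.restrictScalars ℂ (Jsunlet n) ⊓ glove (∅ : Finset (Fin n)) 0) =
      (2 ^ (n / 2 - 1) - 1) ^ 2 := by
  obtain ⟨m, rfl⟩ := he.two_dvd
  have hm : 1 ≤ m := by omega
  have hrank := (glove (∅ : Finset (Fin (2 * m))) 0).finrank_inf_ker_add_finrank_map
    (ψsunlet (2 * m)).toLinearMap
  have himage := (linearIndependent_sunletEven_sunletOdd hm).finrank_span_range_add_add_one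
  rw [map_glove_empty hm, finrank_glove_empty hm] at hrank
  rw [card_coord] at himage
  rw [Nat.mul_div_cancel_left m two_pos, restrictScalars_Jsunlet, inf_comm]
  obtain ⟨N, hN⟩ : ∃ N, 2 ^ (m - 1) = N + 1 :=
    ⟨_, (Nat.succ_pred_eq_of_pos (by positivity)).symm⟩
  rw [hN] at hrank himage ⊢
  rw [Nat.add_sub_cancel]
  nlinarith
end
end

section
/- Let n ≥ 4 be even and let c ∈ (ℤ/2ℤ)^{{2,…,n−1}} with c|_𝔼 ≠ 0 and c|_𝕆 ≠ 0. Then the binomials q_{g(c|_𝔼,0)}q_{h(c|_𝔼,0)} − q_{g(c|_𝔼,c|_𝕆)}q_{h(c|_𝔼,c|_𝕆)} and q_{g(0,0)}q_{h(0,0)} − q_{g(0,c|_𝕆)}q_{h(0,c|_𝕆)} lie in I_{T_0} ∩ G(n,∅), while the binomials q_{g(0,0)}q_{h(0,0)} − q_{g(c|_𝔼,0)}q_{h(c|_𝔼,0)} and q_{g(c|_𝔼,c|_𝕆)}q_{h(c|_𝔼,c|_𝕆)} − q_{g(0,c|_𝕆)}q_{h(0,c|_𝕆)} lie in I_{T_1}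 ∩ G(n,∅). Consequently f_c is an alternating sum of binomial invariants of the two underlying trees. -/
noncomputable section

open MvPolynomial Finset

/-- `c̃ : ℕ → ZMod 2` extends `c ∈ (ℤ/2ℤ)^{2,…,n-1}` by zero (1-based positions). -/
def ctil (n : ℕ) (c : ℕ → ZMod 2) (j : ℕ) : ZMod 2 :=
  if 2 ≤ j ∧ j ≤ n - 1 then c j else 0

lemma ctil_zero (n : ℕ) (c : ℕ → ZMod 2) : ctil n c 0 = 0 := by simp [ctil]

lemma ctil_top (n : ℕ) (c : ℕ → ZMod 2) : ctil n c n = 0 := by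
  unfold ctil; rw [if_neg]; omega

lemma gvec_sum (n : ℕ) (c : ℕ → ZMod 2) :
    ∑ i : Fin n, (ctil n c i.val + ctil n c (i.val + 1)) = 0 := by
  have h : ∀ i : ℕ, ctil n c i + ctil n c (i + 1) = ctil n c (i + 1) - ctil n c i := by
    intro i; rw [CharTwo.sub_eq_add, add_comm]
  calc ∑ i : Fin n, (ctil n c i.val + ctil n c (i.val + 1))
      = ∑ i ∈ range n, (ctil n c i + ctil n c (i + 1)) :=
        Fin.sum_univ_eq_sum_range (fun i => ctil n c i + ctil n c (i + 1)) n
    _ = ∑ i ∈ range n, (ctil n c (i + 1) - ctil n c i) := by simp_rw [h]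
    _ = ctil n c n - ctil n c 0 := Finset.sum_range_sub (fun i => ctil n c i) n
    _ = 0 := by rw [ctil_zero, ctil_top, sub_zero]

/-- The element `g(c) ∈ G_n` with `g_1 = 0` and `g_i = c̃_{i-1} + c̃_i` (1-based). -/
def gElem (n : ℕ) (c : ℕ → ZMod 2) : Gn n :=
  ⟨fun i => ctil n c i.val + ctil n c (i.val + 1), gvec_sum n c⟩

/-- The element `h(c) = 𝟙 + g(c) ∈ G_n` (for even `n`). -/
def hElem (n : ℕ) (he : Even n) (c : ℕ → ZMod 2) : Gn n :=
  ⟨fun i => 1 + (gElem n c).1 i, by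
    have h1 : ∑ i : Fin n, ((1 : ZMod 2) + (gElem n c).1 i)
        = ∑ _i : Fin n, (1 : ZMod 2) + ∑ i : Fin n, (gElem n c).1 i :=
      Finset.sum_add_distrib
    have h2 : ∑ _i : Fin n, (1 : ZMod 2) = (n : ZMod 2) := by
      simp [Finset.sum_const, Finset.card_univ]
    rw [h1, h2, (gElem n c).2, add_zero]
    obtain ⟨k, hk⟩ := he
    subst hk
    push_cast
    exact CharTwo.add_self_eq_zero _⟩

/-- The restriction `(c|_𝔼, 0)` of `c` to the even positions. -/
def cE (c : ℕ → ZMod 2) : ℕ → ZMod 2 := fun j => if Even j then c j else 0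

/-- The restriction `(0, c|_𝕆)` of `c` to the odd positions. -/
def cO (c : ℕ → ZMod 2) : ℕ → ZMod 2 := fun j => if Even j then 0 else c j

/-- The quadratic `f_c ∈ R_n` from Theorem 4.8. -/
def fpoly (n : ℕ) (he : Even n) (c : ℕ → ZMod 2) : Rn n :=
  X (gElem n 0) * X (hElem n he 0)
    - X (gElem n (cE c)) * X (hElem n he (cE c))
    + X (gElem n c) * X (hElem n he c)
    - X (gElem n (cO c)) * X (hElem n he (cO c))

/-! In both trees the product `ψ(q_g) ψ(q_{𝟙+g})` pairs up, on every edge, the labels of `g` and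
of `𝟙 + g`. On a leaf, and on an internal edge cutting off an odd number of leaves, these labels
are complementary, so the edge contributes `a_0 a_1` whatever `g` is; on an internal edge cutting
off an even number of leaves both labels equal the same partial sum of `g`. For `g = g(c)` that
partial sum is `c̃_j`. The edges of `T_0` cutting off an even number of leaves are those with `j`
even, and those of `T_1` the ones with `j` odd; so `ψ_{T_0}(q_{g(c)} q_{h(c)})` only sees `c|_𝔼` and
`ψ_{T_1}(q_{g(c)} q_{h(c)})` only sees `c|_𝕆`. -/

section PartialSums

variable {n : ℕ}

lemma sum_range_add_succ_charTwo {R : Type*} [Ring R] [CharP R 2] (f : ℕ → R) (j : ℕ) :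
    ∑ i ∈ range j, (f i + f (i + 1)) = f 0 + f j := by
  have hsub : ∀ i, f i + f (i + 1) = f (i + 1) - f i := fun i => by
    rw [CharTwo.sub_eq_add, add_comm]
  simp_rw [hsub, sum_range_sub, CharTwo.sub_eq_add, add_comm]

lemma sum_filter_fin_val {M : Type*} [AddCommMonoid M] (P : ℕ → Prop) [DecidablePred P]
    (f : ℕ → M) :
    ∑ i ∈ univ.filter (fun i : Fin n => P i), f i = ∑ i ∈ (range n).filter P, f i := by
  rw [sum_filter, sum_filter]
  exact Fin.sum_univ_eq_sum_range (fun k => if P k then f k else 0) n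

lemma psum1_eq_sum_range (f : ℕ → ZMod 2) {j : ℕ} (hj : j ≤ n) :
    psum1 (fun i : Fin n => f i) j = ∑ i ∈ range j, f i := by
  rw [psum1, sum_filter_fin_val (· < j) f]
  congr 1
  ext i
  simp only [mem_filter, mem_range]
  omega

lemma psum2_eq_sum_Ico (f : ℕ → ZMod 2) {j : ℕ} (hj : j ≤ n) :
    psum2 (fun i : Fin n => f i) j = ∑ i ∈ Ico 1 j, f i := by
  rw [psum2, sum_filter_fin_val (fun i => 0 < i ∧ i < j) f]
  congr 1
  ext i
  simp only [mem_filter, mem_range, mem_Ico]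
  omega

lemma psum1_one_add (g : Fin n → ZMod 2) {j : ℕ} (hj : j ≤ n) :
    psum1 (1 + g) j = j + psum1 g j := by
  have hone : psum1 (fun _ : Fin n => (1 : ZMod 2)) j = j := by
    simp [psum1_eq_sum_range (fun _ => 1) hj]
  rw [← hone, psum1, psum1, psum1, ← sum_add_distrib]
  rfl

lemma psum2_one_add (g : Fin n → ZMod 2) {j : ℕ} (hj : j ≤ n) :
    psum2 (1 + g) j = (j - 1 : ℕ) + psum2 g j := by
  have hone : psum2 (fun _ : Fin n => (1 : ZMod 2)) j = (j - 1 : ℕ) := by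
    simp [psum2_eq_sum_Ico (fun _ => 1) hj]
  rw [← hone, psum2, psum2, psum2, ← sum_add_distrib]
  rfl

end PartialSums

section TreeMonomials

lemma X_mul_X_natCast_add (a k : ℕ) (s : ZMod 2) :
    (X (a, s) * X (a, (k : ZMod 2) + s) : Sn) =
      if Even k then X (a, s) * X (a, s) else X (a, 0) * X (a, 1) := by
  split_ifs with hk
  · rw [ZMod.natCast_eq_zero_iff_even.2 hk, zero_add]
  · rw [ZMod.natCast_eq_one_iff_odd.2 (Nat.not_even_iff_odd.1 hk)]
    fin_cases s
    · rfl
    · exact mul_comm _ _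

lemma leafMonom_mul_one_add {n : ℕ} (g : Fin n → ZMod 2) :
    leafMonom g * leafMonom (1 + g) = ∏ j : Fin n, X ((j : ℕ) + 1, 0) * X ((j : ℕ) + 1, 1) := by
  rw [leafMonom, leafMonom, ← prod_mul_distrib]
  refine prod_congr rfl fun j _ => ?_
  simpa using X_mul_X_natCast_add ((j : ℕ) + 1) 1 (g j)

lemma tree0Monom_mul_one_add_eq {n : ℕ} {g g' : Fin n → ZMod 2}
    (h : ∀ j ∈ Icc 1 (n - 1), Even j → psum1 g j = psum1 g' j) :
    tree0Monom g * tree0Monom (1 + g) = tree0Monom g' * tree0Monom (1 + g') := by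
  simp only [tree0Monom, mul_mul_mul_comm _ (∏ _ ∈ _, _), leafMonom_mul_one_add,
    ← prod_mul_distrib]
  congr 1
  refine prod_congr rfl fun j hj => ?_
  have hjn : j ≤ n := by grind
  rw [psum1_one_add g hjn, psum1_one_add g' hjn, X_mul_X_natCast_add, X_mul_X_natCast_add]
  split_ifs with hj2
  · rw [h j hj hj2]
  · rfl

lemma tree1Monom_mul_one_add_eq {n : ℕ} {g g' : Fin n → ZMod 2}
    (h : ∀ j ∈ Icc 2 n, ¬Even j → psum2 g j = psum2 g' j) :
    tree1Monom g * tree1Monom (1 + g) = tree1Monom g' * tree1Monom (1 + g') := by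
  simp only [tree1Monom, mul_mul_mul_comm _ (∏ _ ∈ _, _), leafMonom_mul_one_add,
    ← prod_mul_distrib]
  congr 1
  refine prod_congr rfl fun j hj => ?_
  have hj2 : 2 ≤ j ∧ j ≤ n := mem_Icc.1 hj
  rw [psum2_one_add g hj2.2, psum2_one_add g' hj2.2, X_mul_X_natCast_add, X_mul_X_natCast_add]
  have hpar : Even (j - 1) ↔ ¬Even j := by
    rw [Nat.even_sub (by omega)]
    simp
  split_ifs with hj1
  · rw [h j hj (hpar.1 hj1)]
  · rfl

end TreeMonomials

section SunletBinomials

variable {n : ℕ}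

lemma ctil_one (c : ℕ → ZMod 2) : ctil n c 1 = 0 := by
  simp [ctil]

lemma psum1_gElem (c : ℕ → ZMod 2) {j : ℕ} (hj : j ≤ n) :
    psum1 (gElem n c).1 j = ctil n c j := by
  rw [gElem, psum1_eq_sum_range (fun k => ctil n c k + ctil n c (k + 1)) hj,
    sum_range_add_succ_charTwo, ctil_zero, zero_add]

lemma psum2_gElem (c : ℕ → ZMod 2) {j : ℕ} (h1j : 1 ≤ j) (hj : j ≤ n) :
    psum2 (gElem n c).1 j = ctil n c j := by
  rw [gElem, psum2_eq_sum_Ico (fun k => ctil n c k + ctil n c (k + 1)) hj,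
    ← psum1_gElem c hj, gElem, psum1_eq_sum_range (fun k => ctil n c k + ctil n c (k + 1)) hj,
    sum_range_eq_add_Ico _ (by omega), ctil_zero, ctil_one, add_zero, zero_add]

lemma val_hElem (he : Even n) (c : ℕ → ZMod 2) : (hElem n he c).1 = 1 + (gElem n c).1 :=
  rfl

lemma X_gElem_mul_X_hElem_mem_glove (he : Even n) (c : ℕ → ZMod 2) :
    (X (gElem n c) * X (hElem n he c) : Rn n) ∈ glove (∅ : Finset (Fin n)) 0 := by
  refine Submodule.subset_span ⟨gElem n c, hElem n he c, ⟨by simp, by simp, fun i _ => ?_⟩, rfl⟩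
  rw [val_hElem, Pi.add_apply, add_left_comm, CharTwo.add_self_eq_zero, add_zero, Pi.one_apply]

lemma sub_mem_Itree0_inf_glove (he : Even n) {c c' : ℕ → ZMod 2}
    (hcc : ∀ j, Even j → ctil n c j = ctil n c' j) :
    X (gElem n c) * X (hElem n he c) - X (gElem n c') * X (hElem n he c')
      ∈ Submodule.restrictScalars ℂ (Itree0 n) ⊓ glove (∅ : Finset (Fin n)) 0 := by
  refine ⟨?_, sub_mem (X_gElem_mul_X_hElem_mem_glove he c) (X_gElem_mul_X_hElem_mem_glove he c')⟩
  have hpsum : ∀ j ∈ Icc 1 (n - 1), Even j → psum1 (gElem n c).1 j = psum1 (gElem n c').1 j :=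
    fun j hj hj2 => by
      have hjn : j ≤ n := by grind
      rw [psum1_gElem c hjn, psum1_gElem c' hjn, hcc j hj2]
  change _ ∈ RingHom.ker (ψtree0 n)
  rw [RingHom.mem_ker, map_sub, sub_eq_zero]
  simpa [ψtree0, val_hElem] using tree0Monom_mul_one_add_eq hpsum

lemma sub_mem_Itree1_inf_glove (he : Even n) {c c' : ℕ → ZMod 2}
    (hcc : ∀ j, ¬Even j → ctil n c j = ctil n c' j) :
    X (gElem n c) * X (hElem n he c) - X (gElem n c') * X (hElem n he c')
      ∈ Submodule.restrictScalars ℂ (Itree1 n) ⊓ glove (∅ : Finset (Fin n)) 0 := by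
  refine ⟨?_, sub_mem (X_gElem_mul_X_hElem_mem_glove he c) (X_gElem_mul_X_hElem_mem_glove he c')⟩
  have hpsum : ∀ j ∈ Icc 2 n, ¬Even j → psum2 (gElem n c).1 j = psum2 (gElem n c').1 j :=
    fun j hj hj2 => by
      have hj' : 1 ≤ j ∧ j ≤ n := by grind
      rw [psum2_gElem c hj'.1 hj'.2, psum2_gElem c' hj'.1 hj'.2, hcc j hj2]
  change _ ∈ RingHom.ker (ψtree1 n)
  rw [RingHom.mem_ker, map_sub, sub_eq_zero]
  simpa [ψtree1, val_hElem] using tree1Monom_mul_one_add_eq hpsum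

end SunletBinomials

section Restrictions

variable {n j : ℕ} (c : ℕ → ZMod 2)

lemma ctil_cE_of_even (hj : Even j) : ctil n (cE c) j = ctil n c j := by
  simp [ctil, cE, hj]

lemma ctil_cE_of_not_even (hj : ¬Even j) : ctil n (cE c) j = ctil n 0 j := by
  simp [ctil, cE, hj]

lemma ctil_cO_of_even (hj : Even j) : ctil n (cO c) j = ctil n 0 j := by
  simp [ctil, cO, hj]

lemma ctil_cO_of_not_even (hj : ¬Even j) : ctil n (cO c) j = ctil n c j := by
  simp [ctil, cO, hj]

end Restrictions

theorem fpoly_binomial_split_general (n : ℕ) (he : Even n) (c : ℕ → ZMod 2) :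
    (X (gElem n (cE c)) * X (hElem n he (cE c)) - X (gElem n c) * X (hElem n he c)
        ∈ Submodule.restrictScalars ℂ (Itree0 n) ⊓ glove (∅ : Finset (Fin n)) 0) ∧
    (X (gElem n 0) * X (hElem n he 0) - X (gElem n (cO c)) * X (hElem n he (cO c))
        ∈ Submodule.restrictScalars ℂ (Itree0 n) ⊓ glove (∅ : Finset (Fin n)) 0) ∧
    (X (gElem n 0) * X (hElem n he 0) - X (gElem n (cE c)) * X (hElem n he (cE c))
        ∈ Submodule.restrictScalars ℂ (Itree1 n) ⊓ glove (∅ : Finset (Fin n)) 0) ∧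
    (X (gElem n c) * X (hElem n he c) - X (gElem n (cO c)) * X (hElem n he (cO c))
        ∈ Submodule.restrictScalars ℂ (Itree1 n) ⊓ glove (∅ : Finset (Fin n)) 0) ∧
    fpoly n he c =
      (X (gElem n 0) * X (hElem n he 0) - X (gElem n (cO c)) * X (hElem n he (cO c)))
        - (X (gElem n (cE c)) * X (hElem n he (cE c)) - X (gElem n c) * X (hElem n he c)) ∧
    fpoly n he c =
      (X (gElem n 0) * X (hElem n he 0) - X (gElem n (cE c)) * X (hElem n he (cE c)))
        + (X (gElem n c) * X (hElem n he c) - X (gElem n (cO c)) * X (hElem n he (cO c))) := by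
  refine ⟨sub_mem_Itree0_inf_glove he fun j hj => ctil_cE_of_even c hj,
    sub_mem_Itree0_inf_glove he fun j hj => (ctil_cO_of_even c hj).symm,
    sub_mem_Itree1_inf_glove he fun j hj => (ctil_cE_of_not_even c hj).symm,
    sub_mem_Itree1_inf_glove he fun j hj => (ctil_cO_of_not_even c hj).symm, ?_, ?_⟩ <;>
  · rw [fpoly]
    ring

/-- Proposition 4.13: the two binomial halves of `f_c` split between the two
underlying tree ideals, so `f_c` is an alternating sum of binomial tree invariants. -/
theorem fpoly_binomial_split (n : ℕ) (hn : 4 ≤ n) (he : Even n) (c : ℕ → ZMod 2)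
    (hE : ∃ j ∈ Icc 2 (n - 1), Even j ∧ c j ≠ 0)
    (hO : ∃ j ∈ Icc 2 (n - 1), ¬Even j ∧ c j ≠ 0) :
    (X (gElem n (cE c)) * X (hElem n he (cE c)) - X (gElem n c) * X (hElem n he c)
        ∈ Submodule.restrictScalars ℂ (Itree0 n) ⊓ glove (∅ : Finset (Fin n)) 0) ∧
    (X (gElem n 0) * X (hElem n he 0) - X (gElem n (cO c)) * X (hElem n he (cO c))
        ∈ Submodule.restrictScalars ℂ (Itree0 n) ⊓ glove (∅ : Finset (Fin n)) 0) ∧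
    (X (gElem n 0) * X (hElem n he 0) - X (gElem n (cE c)) * X (hElem n he (cE c))
        ∈ Submodule.restrictScalars ℂ (Itree1 n) ⊓ glove (∅ : Finset (Fin n)) 0) ∧
    (X (gElem n c) * X (hElem n he c) - X (gElem n (cO c)) * X (hElem n he (cO c))
        ∈ Submodule.restrictScalars ℂ (Itree1 n) ⊓ glove (∅ : Finset (Fin n)) 0) ∧
    fpoly n he c =
      (X (gElem n 0) * X (hElem n he 0) - X (gElem n (cO c)) * X (hElem n he (cO c)))
        - (X (gElem n (cE c)) * X (hElem n he (cE c)) - X (gElem n c) * X (hElem n he c)) ∧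
    fpoly n he c =
      (X (gElem n 0) * X (hElem n he 0) - X (gElem n (cE c)) * X (hElem n he (cE c)))
        + (X (gElem n c) * X (hElem n he c) - X (gElem n (cO c)) * X (hElem n he (cO c))) :=
  fpoly_binomial_split_general n he c
end
end
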